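/- Let V be a real vector space, a : V → V → ℝ a symmetric positive semidefinite bilinear form, and Π : V → V a linear map with Π ∘ Π = Π and a(v − Π v, Π w) = 0 for all v, w ∈ V. Let S : V → V → ℝ be a symmetric bilinear form and α_*, α^* > 0 constants such that α_* a(v,v) ≤ S(v,v) ≤ α^* a(v,v) for every v in the kernel of Π. Define a_h(u,v) := a(Π u, Π v) + S(u − Π u, v − Π v). Then for every v ∈ V, min(1, α_*) · a(v,v) ≤ a_h(v,v) ≤ max(1, α^*) · a(v,v). -/
import Mathlib


/-- Stability of the stabilised VEM bilinear form: if `S` is spectrally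
equivalent to `a` on the kernel of the `a`-orthogonal projection `P`, then
`a_h(u,v) := a (P u) (P v) + S (u − P u) (v − P v)` satisfies
`min 1 α_* · a(v,v) ≤ a_h(v,v) ≤ max 1 α^* · a(v,v)` for all `v`. -/
theorem vem_stability {V : Type*} [AddCommGroup V] [Module ℝ V]
    (a : V →ₗ[ℝ] V →ₗ[ℝ] ℝ)
    (hsymm : ∀ u v : V, a u v = a v u)
    (hpsd : ∀ v : V, 0 ≤ a v v)
    (P : V →ₗ[ℝ] V)
    (hproj : ∀ v : V, P (P v) = P v)
    (horth : ∀ v w : V, a (v - P v) (P w) = 0)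
    (S : V →ₗ[ℝ] V →ₗ[ℝ] ℝ)
    (hSsymm : ∀ u v : V, S u v = S v u)
    (αs αS : ℝ) (hαs : 0 < αs) (hαS : 0 < αS)
    (hlow : ∀ v : V, P v = 0 → αs * a v v ≤ S v v)
    (hhigh : ∀ v : V, P v = 0 → S v v ≤ αS * a v v) :
    ∀ v : V,
      min 1 αs * a v v ≤ a (P v) (P v) + S (v - P v) (v - P v) ∧
      a (P v) (P v) + S (v - P v) (v - P v) ≤ max 1 αS * a v v := by
  intro v
  set k := v - P v with hk
  have hPk : P k = 0 := by simp [hk, map_sub, hproj]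
  -- Pythagoras: a v v = a (P v) (P v) + a k k
  have hcross : a k (P v) = 0 := horth v v
  have hcross' : a (P v) k = 0 := by rw [hsymm]; exact hcross
  have hsplit : a v v = a (P v) (P v) + a k k := by
    have hv : v = P v + k := by simp [hk]
    calc a v v = a (P v + k) (P v + k) := by rw [← hv]
      _ = a (P v) (P v) + a (P v) k + (a k (P v) + a k k) := by
          simp [map_add]; ring
      _ = a (P v) (P v) + a k k := by rw [hcross, hcross']; ring
  have hP : (0:ℝ) ≤ a (P v) (P v) := hpsd _
  have hK : (0:ℝ) ≤ a k k := hpsd _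
  have hlo := hlow k hPk
  have hhi := hhigh k hPk
  constructor
  · have h1 : min 1 αs * a (P v) (P v) ≤ a (P v) (P v) := by
      nlinarith [min_le_left (1:ℝ) αs]
    have h2 : min 1 αs * a k k ≤ S k k := by
      nlinarith [min_le_right (1:ℝ) αs]
    calc min 1 αs * a v v = min 1 αs * a (P v) (P v) + min 1 αs * a k k := by
          rw [hsplit]; ring
      _ ≤ a (P v) (P v) + S k k := add_le_add h1 h2
  · have h1 : a (P v) (P v) ≤ max 1 αS * a (P v) (P v) := by
      nlinarith [le_max_left (1:ℝ) αS]
    have h2 : S k k ≤ max 1 αS * a k k := by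
      nlinarith [le_max_right (1:ℝ) αS]
    calc a (P v) (P v) + S k k ≤ max 1 αS * a (P v) (P v) + max 1 αS * a k k :=
          add_le_add h1 h2
      _ = max 1 αS * a v v := by rw [hsplit]; ring
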